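/- Let F : (ℂ^p,0) → (ℂ^m,0) be a formal mapping, X_1, X_2 formal vector fields on ℂ^p, Y_1, Y_2 formal vector fields on ℂ^m, and suppose there are nonzero c_1, c_2 ∈ ℂ[[x]] such that X_j(f∘F) = c_j·((Y_j f)∘F) for all f ∈ ℂ[[y]] and j = 1,2. Then there exist a formal vector field X' on ℂ^p and a nonzero c' ∈ ℂ[[x]] such that X'(f∘F) = c'·(([Y_1,Y_2]f)∘F) for all f ∈ ℂ[[y]], where [ , ] is the commutator of vector fields. In fact one may take c' = (c_1c_2)^2 and X' = c_1c_2[X_1,X_2] + c_2(X_2c_1)X_1 − c_1(X_1c_2)X_2. -/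

import Mathlib

noncomputable section

namespace Segre

open MvPowerSeries

/-- Formal power series with complex coefficients. -/
abbrev PS (σ : Type*) := MvPowerSeries σ ℂ

/-- Build a power series from its coefficient function. -/
def ofFun {σ : Type*} (g : (σ →₀ ℕ) → ℂ) : PS σ := g

/-- Coefficientwise complex conjugation of a formal power series. -/
def conjPS {σ : Type*} (f : PS σ) : PS σ := MvPowerSeries.map (starRingEnd ℂ) f

/-- Formal partial derivative of a formal power series. -/
def pd {σ : Type*} [DecidableEq σ] (j : σ) (f : PS σ) : PS σ :=
  ofFun fun m => ((m j : ℂ) + 1) * MvPowerSeries.coeff (m + Finsupp.single j 1) f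

/-- Reindexing of variables along an equivalence. -/
def reindexPS {σ τ : Type*} (e : σ ≃ τ) (f : PS σ) : PS τ :=
  ofFun fun m => MvPowerSeries.coeff (Finsupp.equivMapDomain e.symm m) f

/-- Formal composition (substitution) `f ∘ F` of a formal power series
`f` in the variables `τ` with a family `F` of power series without constant
term.  (For families with nonvanishing constant term the value is junk.) -/
def cmp {τ σ : Type*} [Fintype τ] [DecidableEq τ] (f : PS τ) (F : τ → PS σ) : PS σ :=
  ofFun fun m => MvPowerSeries.coeff m
    (∑ α ∈ Finset.Iic (Finsupp.equivFunOnFinite.symm fun _ => m.sum fun _ k => k),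
      MvPowerSeries.coeff α f • ∏ i, F i ^ α i)

/-- Renaming of variables along an (injective) map. -/
def injPS {σ τ : Type*} [Fintype σ] [DecidableEq σ] (ι : σ → τ) (f : PS σ) : PS τ :=
  cmp f fun s => MvPowerSeries.X (ι s)

/-- The "generic rank" of a matrix over a commutative ring: the largest size of a
nonvanishing minor. -/
def matGenRank {α β R : Type*} [Fintype α] [Fintype β] [CommRing R] (M : Matrix α β R) : ℕ :=
  sSup {s | ∃ (r : Fin s ↪ α) (c : Fin s ↪ β), (M.submatrix r c).det ≠ 0}

/-- The Jacobian matrix of a formal mapping. -/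
def jac {σ ι : Type*} [DecidableEq σ] (F : ι → PS σ) : Matrix ι σ (PS σ) :=
  Matrix.of fun i j => pd j (F i)

/-- The rank `Rk F` of a formal mapping: the largest size of a nonvanishing minor of the
Jacobian matrix, i.e. the rank of the Jacobian matrix over the fraction field. -/
def rk {σ ι : Type*} [Fintype σ] [DecidableEq σ] [Fintype ι] (F : ι → PS σ) : ℕ :=
  matGenRank (jac F)

/-- The rank at `0` of the Jacobian matrix of a formal mapping. -/
def rk0 {σ ι : Type*} [Fintype σ] [DecidableEq σ] [Fintype ι] (F : ι → PS σ) : ℕ :=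
  Matrix.rank ((jac F).map (MvPowerSeries.constantCoeff (σ := σ) (R := ℂ)))

/-- A formal mapping: each component has vanishing constant term. -/
def IsFormalMap {σ ι : Type*} (F : ι → PS σ) : Prop :=
  ∀ i, MvPowerSeries.constantCoeff (σ := σ) (R := ℂ) (F i) = 0

/-- The differential at `0` of a formal power series. -/
def diff0 {σ : Type*} [DecidableEq σ] (f : PS σ) : σ → ℂ :=
  fun j => MvPowerSeries.constantCoeff (σ := σ) (R := ℂ) (pd j f)

/-- `I` is the manifold ideal with generators `f`: the generators have no constant
term, generate `I`, and have linearly independent differentials at `0`. -/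
def IsMfldIdealWith {σ ι : Type*} [Fintype σ] [DecidableEq σ]
    (I : Ideal (PS σ)) (f : ι → PS σ) : Prop :=
  (∀ i, MvPowerSeries.constantCoeff (σ := σ) (R := ℂ) (f i) = 0) ∧
  I = Ideal.span (Set.range f) ∧
  LinearIndependent ℂ fun i => diff0 (f i)

/-- `I` is a manifold ideal of codimension `d`. -/
def IsMfldIdeal {σ : Type*} [Fintype σ] [DecidableEq σ] (I : Ideal (PS σ)) (d : ℕ) : Prop :=
  ∃ f : Fin d → PS σ, IsMfldIdealWith I f

/-- A formal vector field, given by its coefficients. -/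
abbrev VF (σ : Type*) := σ → PS σ

/-- The action of a formal vector field (as a derivation) on a power series. -/
def vfApply {σ : Type*} [Fintype σ] [DecidableEq σ] (X : VF σ) (f : PS σ) : PS σ :=
  ∑ j, X j * pd j f

/-- The Lie bracket (commutator) of two formal vector fields. -/
def vfBracket {σ : Type*} [Fintype σ] [DecidableEq σ] (X Y : VF σ) : VF σ :=
  fun j => vfApply X (Y j) - vfApply Y (X j)

/-- Evaluation of a formal vector field at the origin. -/
def vfEval0 {σ : Type*} (X : VF σ) : σ → ℂ :=
  fun j => MvPowerSeries.constantCoeff (σ := σ) (R := ℂ) (X j)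

/-- A formal vector field is tangent to (the formal manifold defined by) an ideal if it
maps the ideal into itself. -/
def Tangent {σ : Type*} [Fintype σ] [DecidableEq σ] (X : VF σ) (I : Ideal (PS σ)) : Prop :=
  ∀ f ∈ I, vfApply X f ∈ I

/-- The Lie algebra (of formal vector fields) generated by a set `S`. -/
inductive lieGen {σ : Type*} [Fintype σ] [DecidableEq σ] (S : Set (VF σ)) : VF σ → Prop
  | base {X} : X ∈ S → lieGen S X
  | add {X Y} : lieGen S X → lieGen S Y → lieGen S (X + Y)
  | smul (c : ℂ) {X} : lieGen S X → lieGen S (fun j => (MvPowerSeries.C (σ := σ) (R := ℂ) c) * X j)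
  | bracket {X Y} : lieGen S X → lieGen S Y → lieGen S (vfBracket X Y)

/-- A set of formal vector fields which is a Lie algebra and a `ℂ[[x]]`-module. -/
structure IsLieMod {σ : Type*} [Fintype σ] [DecidableEq σ] (g : Set (VF σ)) : Prop where
  add_mem : ∀ {X Y : VF σ}, X ∈ g → Y ∈ g → X + Y ∈ g
  smul_mem : ∀ (a : PS σ) {X : VF σ}, X ∈ g → (fun j => a * X j) ∈ g
  bracket_mem : ∀ {X Y : VF σ}, X ∈ g → Y ∈ g → vfBracket X Y ∈ g

/-- The involution `σ(f)(Z,ζ) = conj f(ζ,Z)` on power series in `(Z,ζ)`. -/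
def realOp {σZ : Type*} (f : PS (σZ ⊕ σZ)) : PS (σZ ⊕ σZ) :=
  conjPS (reindexPS (Equiv.sumComm σZ σZ) f)

/-- The matrix `∂ρ/∂Z` of the derivatives of `ρ` in the first (holomorphic) block of
variables. -/
def zJac {σZ ι : Type*} [DecidableEq σZ] (ρ : ι → PS (σZ ⊕ σZ)) : Matrix ι σZ (PS (σZ ⊕ σZ)) :=
  Matrix.of fun l j => pd (Sum.inl j) (ρ l)

/-- `I` is the ideal of a formal generic manifold of codimension `d`, with given
generators `ρ`: `I` is a real manifold ideal and `∂ρ/∂Z(0)` has rank `d`. -/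
def IsGenericMfld {σZ : Type*} [Fintype σZ] [DecidableEq σZ] {d : ℕ}
    (I : Ideal (PS (σZ ⊕ σZ))) (ρ : Fin d → PS (σZ ⊕ σZ)) : Prop :=
  IsMfldIdealWith I ρ ∧ (∀ f ∈ I, realOp f ∈ I) ∧
  Matrix.rank ((zJac ρ).map (MvPowerSeries.constantCoeff (R := ℂ))) = d

/-- The set of formal `(1,0)` and `(0,1)` vector fields tangent to (the manifold defined
by) `I`. -/
def holFields {σZ : Type*} [Fintype σZ] [DecidableEq σZ] (I : Ideal (PS (σZ ⊕ σZ))) :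
    Set (VF (σZ ⊕ σZ)) :=
  {X | ((∀ j, X (Sum.inr j) = 0) ∨ (∀ j, X (Sum.inl j) = 0)) ∧ Tangent X I}

/-- `dim_ℂ g_M(0)`, where `g_M` is the Lie algebra generated by the formal `(1,0)` and
`(0,1)` vector fields tangent to `M`. -/
def gMDim {σZ : Type*} [Fintype σZ] [DecidableEq σZ] (I : Ideal (PS (σZ ⊕ σZ))) : ℕ :=
  Module.finrank ℂ (Submodule.span ℂ (vfEval0 '' {X | lieGen (holFields I) X}))

/-- `γ(ζ,t)` is a Segre variety mapping for the (formal generic manifold with) defining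
series `ρ`:  `γ` has no constant term, `ρ(γ(ζ,t),ζ) = 0`, and `∂γ/∂t(0)` has rank `n`. -/
def IsSegreMap {n d : ℕ} (ρ : Fin d → PS (Fin (n + d) ⊕ Fin (n + d)))
    (γ : Fin (n + d) → PS (Fin (n + d) ⊕ Fin n)) : Prop :=
  IsFormalMap γ ∧
  (∀ l, cmp (ρ l) (Sum.elim γ fun j => MvPowerSeries.X (Sum.inl j)) = 0) ∧
  Matrix.rank
    (Matrix.of fun (i : Fin (n + d)) (j : Fin n) =>
      MvPowerSeries.constantCoeff (R := ℂ) (pd (Sum.inr j) (γ i))) = n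

/-- The iterated Segre mappings: `iterSegre γ j` is `v^{j+1}`, a formal mapping from
`ℂ^{(j+1)n}` (with variables indexed by `Fin (j+1) × Fin n`) to `ℂ^N`. -/
def iterSegre {n d : ℕ} (γ : Fin (n + d) → PS (Fin (n + d) ⊕ Fin n)) :
    (j : ℕ) → Fin (n + d) → PS (Fin (j + 1) × Fin n)
  | 0 => fun c =>
      cmp (γ c) (Sum.elim (fun _ => 0) fun i => MvPowerSeries.X ((0 : Fin 1), i))
  | m + 1 => fun c =>
      cmp (γ c)
        (Sum.elim
          (fun z => conjPS (injPS (fun p : Fin (m + 1) × Fin n => (p.1.castSucc, p.2))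
            (iterSegre γ m z)))
          (fun i => MvPowerSeries.X (Fin.last (m + 1), i)))

/-! Applying `X₁` to `X₂(f ∘ F) = c₂ · (Y₂ f) ∘ F` gives, by the Leibniz rule,
`X₁X₂(f ∘ F) = c₁c₂ · (Y₁Y₂ f) ∘ F + (X₁c₂) · (Y₂ f) ∘ F`. After antisymmetrising and
multiplying by `c₁c₂`, the two first-order error terms are exactly the ones removed by the
correction terms `c₂(X₂c₁)X₁ − c₁(X₁c₂)X₂` of `X'`. -/

theorem _root_.MvPowerSeries.pderiv_comm {σ R : Type*} [CommSemiring R] (i j : σ)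
    (f : MvPowerSeries σ R) : pderiv R i (pderiv R j f) = pderiv R j (pderiv R i f) := by
  ext n
  simp only [coeff_pderiv, add_right_comm n (Finsupp.single i 1)]
  rcases eq_or_ne i j with rfl | hij
  · rfl
  · simp only [Finsupp.coe_add, Pi.add_apply, Finsupp.single_eq_of_ne hij,
      Finsupp.single_eq_of_ne hij.symm, add_zero]
    ring

theorem coeff_ofFun {σ : Type*} (g : (σ →₀ ℕ) → ℂ) (n : σ →₀ ℕ) : coeff n (ofFun g) = g n := rfl

theorem cmp_sub {σ τ : Type*} [Fintype τ] [DecidableEq τ] (f g : PS τ) (F : τ → PS σ) :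
    cmp (f - g) F = cmp f F - cmp g F := by
  ext n
  simp only [cmp, coeff_ofFun, map_sub, sub_smul, Finset.sum_sub_distrib]

variable {σ : Type*} [DecidableEq σ]

theorem pd_eq_pderiv (j : σ) (f : PS σ) : pd j f = pderiv ℂ j f := by
  ext n
  rw [coeff_pderiv]
  exact mul_comm _ _

variable [Fintype σ]

def vfDerivation (X : VF σ) : Derivation ℂ (PS σ) (PS σ) :=
  ∑ j, X j • pderiv ℂ j

theorem vfDerivation_apply (X : VF σ) (f : PS σ) : vfDerivation X f = vfApply X f := by
  rw [vfDerivation, ← Derivation.coeFnAddMonoidHom_apply, map_sum, Finset.sum_apply]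
  simp [Derivation.coeFnAddMonoidHom_apply, vfApply, pd_eq_pderiv]

theorem vfApply_mul (X : VF σ) (f g : PS σ) :
    vfApply X (f * g) = f * vfApply X g + g * vfApply X f := by
  simp only [← vfDerivation_apply, Derivation.leibniz, smul_eq_mul]

theorem vfApply_add_left (X Y : VF σ) (f : PS σ) :
    vfApply (X + Y) f = vfApply X f + vfApply Y f := by
  simp only [vfApply, Pi.add_apply, add_mul, Finset.sum_add_distrib]

theorem vfApply_sub_left (X Y : VF σ) (f : PS σ) :
    vfApply (X - Y) f = vfApply X f - vfApply Y f := by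
  simp only [vfApply, Pi.sub_apply, sub_mul, Finset.sum_sub_distrib]

theorem vfApply_smul_left (a : PS σ) (X : VF σ) (f : PS σ) :
    vfApply (a • X) f = a * vfApply X f := by
  simp only [vfApply, Pi.smul_apply, smul_eq_mul, mul_assoc, Finset.mul_sum]

def vfSecondOrder (X Y : VF σ) (f : PS σ) : PS σ :=
  ∑ j, ∑ k, X j * Y k * pd j (pd k f)

theorem vfSecondOrder_comm (X Y : VF σ) (f : PS σ) :
    vfSecondOrder X Y f = vfSecondOrder Y X f := by
  rw [vfSecondOrder, Finset.sum_comm]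
  refine Finset.sum_congr rfl fun k _ => Finset.sum_congr rfl fun j _ => ?_
  rw [pd_eq_pderiv j, pd_eq_pderiv k, pderiv_comm, ← pd_eq_pderiv, ← pd_eq_pderiv, mul_comm (Y k)]

theorem vfApply_vfApply (X Y : VF σ) (f : PS σ) :
    vfApply X (vfApply Y f) = vfSecondOrder X Y f + ∑ k, vfApply X (Y k) * pd k f := by
  conv_lhs => rw [← vfDerivation_apply X, vfApply, map_sum]
  simp only [Derivation.leibniz, smul_eq_mul, Finset.sum_add_distrib, vfDerivation_apply]
  rw [vfSecondOrder, Finset.sum_comm]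
  congr 1
  · refine Finset.sum_congr rfl fun k _ => ?_
    rw [vfApply, Finset.mul_sum]
    exact Finset.sum_congr rfl fun j _ => by ring
  · exact Finset.sum_congr rfl fun k _ => mul_comm _ _

theorem vfApply_vfBracket (X Y : VF σ) (f : PS σ) :
    vfApply (vfBracket X Y) f = vfApply X (vfApply Y f) - vfApply Y (vfApply X f) := by
  rw [vfApply_vfApply, vfApply_vfApply, vfSecondOrder_comm X Y, vfApply]
  simp only [vfBracket, sub_mul, Finset.sum_sub_distrib]
  ring

theorem vfApply_intertwine_vfBracket {τ : Type*} [Fintype τ] [DecidableEq τ]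
    (φ : PS τ → PS σ) (hφ : ∀ f g, φ (f - g) = φ f - φ g)
    {X₁ X₂ : VF σ} {Y₁ Y₂ : VF τ} {c₁ c₂ : PS σ}
    (h₁ : ∀ f, vfApply X₁ (φ f) = c₁ * φ (vfApply Y₁ f))
    (h₂ : ∀ f, vfApply X₂ (φ f) = c₂ * φ (vfApply Y₂ f)) (f : PS τ) :
    vfApply ((c₁ * c₂) • vfBracket X₁ X₂ + (c₂ * vfApply X₂ c₁) • X₁
        - (c₁ * vfApply X₁ c₂) • X₂) (φ f) =
      (c₁ * c₂) ^ 2 * φ (vfApply (vfBracket Y₁ Y₂) f) := by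
  have h₁₂ : vfApply X₁ (vfApply X₂ (φ f)) =
      c₂ * (c₁ * φ (vfApply Y₁ (vfApply Y₂ f))) + φ (vfApply Y₂ f) * vfApply X₁ c₂ := by
    rw [h₂, vfApply_mul, h₁]
  have h₂₁ : vfApply X₂ (vfApply X₁ (φ f)) =
      c₁ * (c₂ * φ (vfApply Y₂ (vfApply Y₁ f))) + φ (vfApply Y₁ f) * vfApply X₂ c₁ := by
    rw [h₁, vfApply_mul, h₂]
  rw [vfApply_sub_left, vfApply_add_left, vfApply_smul_left, vfApply_smul_left,
    vfApply_smul_left, vfApply_vfBracket, vfApply_vfBracket, h₁₂, h₂₁, h₁, h₂, hφ]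
  ring

theorem statement_17_general {p m : ℕ} (F : Fin m → PS (Fin p))
    (X₁ X₂ : VF (Fin p)) (Y₁ Y₂ : VF (Fin m)) (c₁ c₂ : PS (Fin p))
    (hc₁ : c₁ ≠ 0) (hc₂ : c₂ ≠ 0)
    (h1 : ∀ f : PS (Fin m), vfApply X₁ (cmp f F) = c₁ * cmp (vfApply Y₁ f) F)
    (h2 : ∀ f : PS (Fin m), vfApply X₂ (cmp f F) = c₂ * cmp (vfApply Y₂ f) F) :
    (∃ (X' : VF (Fin p)) (c' : PS (Fin p)), c' ≠ 0 ∧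
      ∀ f : PS (Fin m),
        vfApply X' (cmp f F) = c' * cmp (vfApply (vfBracket Y₁ Y₂) f) F) ∧
    ((c₁ * c₂) ^ 2 ≠ 0 ∧
      ∀ f : PS (Fin m),
        vfApply
            (fun j => c₁ * c₂ * vfBracket X₁ X₂ j
              + c₂ * vfApply X₂ c₁ * X₁ j - c₁ * vfApply X₁ c₂ * X₂ j)
            (cmp f F) =
          (c₁ * c₂) ^ 2 * cmp (vfApply (vfBracket Y₁ Y₂) f) F) := by
  have hc : (c₁ * c₂) ^ 2 ≠ 0 := pow_ne_zero 2 (mul_ne_zero hc₁ hc₂)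
  have hX' := vfApply_intertwine_vfBracket (cmp · F) (fun f g => cmp_sub f g F) h1 h2
  exact ⟨⟨_, _, hc, hX'⟩, hc, hX'⟩

/-- Commutators of pushed-forward vector fields: one may take
`c' = (c₁c₂)²` and `X' = c₁c₂[X₁,X₂] + c₂(X₂c₁)X₁ − c₁(X₁c₂)X₂`. -/
theorem statement_17 {p m : ℕ} (F : Fin m → PS (Fin p)) (hF0 : IsFormalMap F)
    (X₁ X₂ : VF (Fin p)) (Y₁ Y₂ : VF (Fin m)) (c₁ c₂ : PS (Fin p))
    (hc₁ : c₁ ≠ 0) (hc₂ : c₂ ≠ 0)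
    (h1 : ∀ f : PS (Fin m), vfApply X₁ (cmp f F) = c₁ * cmp (vfApply Y₁ f) F)
    (h2 : ∀ f : PS (Fin m), vfApply X₂ (cmp f F) = c₂ * cmp (vfApply Y₂ f) F) :
    (∃ (X' : VF (Fin p)) (c' : PS (Fin p)), c' ≠ 0 ∧
      ∀ f : PS (Fin m),
        vfApply X' (cmp f F) = c' * cmp (vfApply (vfBracket Y₁ Y₂) f) F) ∧
    ((c₁ * c₂) ^ 2 ≠ 0 ∧
      ∀ f : PS (Fin m),
        vfApply
            (fun j => c₁ * c₂ * vfBracket X₁ X₂ j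
              + c₂ * vfApply X₂ c₁ * X₁ j - c₁ * vfApply X₁ c₂ * X₂ j)
            (cmp f F) =
          (c₁ * c₂) ^ 2 * cmp (vfApply (vfBracket Y₁ Y₂) f) F) :=
  statement_17_general F X₁ X₂ Y₁ Y₂ c₁ c₂ hc₁ hc₂ h1 h2

end Segre
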